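/- For any 0 ≤ p ≤ 1 and δ with p < δ ≤ 1/2 and real R satisfying R < 1 - H(δ) - δ log₂ 3, the quantity 2^{-(n - ⌊Rn⌋)} · Σ_{i=1}^{⌊δn⌋} binom(n,i) p^i (1-p)^{n-i} · Σ_{j=0}^{i} binom(n,j) 3^j tends to 0 as n → ∞. -/

import Mathlib

open Real Filter

/-- The binary entropy function with base-2 logarithms. -/
noncomputable def H2 (d : ℝ) : ℝ := -d * Real.logb 2 d - (1 - d) * Real.logb 2 (1 - d)

theorem random_coding_key_estimate (p d R : ℝ) (hp0 : 0 ≤ p) (hp1 : p ≤ 1)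
    (hpd : p < d) (hd : d ≤ 1 / 2)
    (hR : R < 1 - H2 d - d * Real.logb 2 3) :
    Tendsto (fun n : ℕ =>
        (2 : ℝ) ^ (-((n : ℝ) - ⌊R * n⌋)) *
          ∑ i ∈ Finset.Icc 1 ⌊d * n⌋₊,
            (n.choose i : ℝ) * p ^ i * (1 - p) ^ (n - i) *
              ∑ j ∈ Finset.range (i + 1), (n.choose j : ℝ) * 3 ^ j)
      atTop (nhds 0) := by
  have hd0 : 0 < d := lt_of_le_of_lt hp0 hpd
  have h1d : 0 < 1 - d := by linarith
  have h1p : 0 ≤ 1 - p := by linarith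
  set t : ℝ := d / (3 * (1 - d)) with ht_def
  have ht0 : 0 < t := by positivity
  have ht1 : t ≤ 1 := by
    rw [ht_def, div_le_one (by positivity)]
    nlinarith
  have h3t : 1 + 3 * t = (1 - d)⁻¹ := by
    rw [ht_def]; field_simp; ring
  set c : ℝ := (2:ℝ) ^ (R - 1) * t ^ (-d) * (1 + 3 * t) with hc_def
  have h3t0 : (0:ℝ) < 1 + 3 * t := by positivity
  have hc0 : 0 < c := by positivity
  have hc1 : c < 1 := by
    have hlog2 : (0:ℝ) < Real.log 2 := Real.log_pos (by norm_num)
    have hlogc : Real.log c = (R - 1 + H2 d + d * Real.logb 2 3) * Real.log 2 := by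
      rw [hc_def, Real.log_mul (by positivity) (by positivity),
        Real.log_mul (by positivity) (by positivity),
        Real.log_rpow (by norm_num), Real.log_rpow ht0, h3t, Real.log_inv,
        ht_def, Real.log_div (ne_of_gt hd0) (by positivity),
        Real.log_mul (by norm_num) (ne_of_gt h1d)]
      unfold H2 Real.logb
      field_simp
      ring
    have hneg : Real.log c < 0 := by
      rw [hlogc]
      apply mul_neg_of_neg_of_pos _ hlog2
      linarith
    exact (Real.log_neg_iff hc0).mp hneg
  apply squeeze_zero (g := fun n : ℕ => c ^ n) (fun n => ?_) (fun n => ?_)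
    (tendsto_pow_atTop_nhds_zero_of_lt_one hc0.le hc1)
  · apply mul_nonneg (Real.rpow_nonneg (by norm_num) _)
    apply Finset.sum_nonneg
    intro i _
    have : 0 ≤ ∑ j ∈ Finset.range (i + 1), (n.choose j : ℝ) * 3 ^ j := by positivity
    positivity
  · set m := ⌊d * (n:ℝ)⌋₊ with hm
    have hmn : (m:ℝ) ≤ d * n := Nat.floor_le (by positivity)
    have hmn' : m ≤ n := by
      have h1 : d * (n:ℝ) ≤ n := by nlinarith [Nat.cast_nonneg (α := ℝ) n]
      have := Nat.floor_mono h1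
      simpa using this
    have hinner : ∀ i ∈ Finset.Icc 1 m,
        (∑ j ∈ Finset.range (i + 1), (n.choose j : ℝ) * 3 ^ j)
          ≤ t ^ (-(d * n)) * (1 + 3 * t) ^ n := by
      intro i hi
      obtain ⟨hi1, hi2⟩ := Finset.mem_Icc.mp hi
      calc ∑ j ∈ Finset.range (i + 1), (n.choose j : ℝ) * 3 ^ j
          ≤ ∑ j ∈ Finset.range (i + 1), t ^ (-(d * (n:ℝ))) * ((n.choose j : ℝ) * (3*t) ^ j) := by
            apply Finset.sum_le_sum
            intro j hj
            have hjm : (j:ℝ) ≤ d * n := by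
              have hji : j ≤ m := le_trans (Nat.lt_succ_iff.mp (Finset.mem_range.mp hj)) hi2
              calc (j:ℝ) ≤ m := Nat.cast_le.mpr hji
                _ ≤ d * n := hmn
            have key : 1 ≤ t ^ (-(d*(n:ℝ))) * t ^ (j:ℝ) := by
              rw [← Real.rpow_add ht0]
              apply Real.one_le_rpow_of_pos_of_le_one_of_nonpos ht0 ht1
              linarith
            calc (n.choose j : ℝ) * 3 ^ j = ((n.choose j : ℝ) * 3 ^ j) * 1 := by ring
              _ ≤ ((n.choose j:ℝ) * 3 ^ j) * (t ^ (-(d*(n:ℝ))) * t ^ (j:ℝ)) := by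
                  apply mul_le_mul_of_nonneg_left key (by positivity)
              _ = t ^ (-(d*(n:ℝ))) * ((n.choose j : ℝ) * (3*t) ^ j) := by
                  rw [mul_pow, Real.rpow_natCast]; ring
        _ = t ^ (-(d*(n:ℝ))) * ∑ j ∈ Finset.range (i + 1), (n.choose j : ℝ) * (3*t) ^ j := by
            rw [Finset.mul_sum]
        _ ≤ t ^ (-(d*(n:ℝ))) * (1 + 3*t) ^ n := by
            apply mul_le_mul_of_nonneg_left _ (Real.rpow_nonneg ht0.le _)
            calc ∑ j ∈ Finset.range (i + 1), (n.choose j : ℝ) * (3*t) ^ j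
                ≤ ∑ j ∈ Finset.range (n + 1), (n.choose j : ℝ) * (3*t) ^ j := by
                  apply Finset.sum_le_sum_of_subset_of_nonneg
                  · apply Finset.range_subset_range.mpr; omega
                  · intro j _ _; positivity
              _ = (3*t + 1) ^ n := by
                  rw [add_pow]
                  exact (Finset.sum_congr rfl (fun j _ => by rw [one_pow]; ring)).symm
              _ = (1 + 3*t) ^ n := by ring_nf
    have hprob : ∑ i ∈ Finset.Icc 1 m, (n.choose i : ℝ) * p ^ i * (1 - p) ^ (n - i) ≤ 1 := by
      calc ∑ i ∈ Finset.Icc 1 m, (n.choose i : ℝ) * p ^ i * (1 - p) ^ (n - i)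
          ≤ ∑ i ∈ Finset.range (n+1), (n.choose i : ℝ) * p ^ i * (1 - p) ^ (n - i) := by
            apply Finset.sum_le_sum_of_subset_of_nonneg
            · intro i hi
              rw [Finset.mem_range]
              have := (Finset.mem_Icc.mp hi).2
              omega
            · intro i _ _; positivity
        _ = 1 := by
            have h := add_pow p (1-p) n
            rw [show p + (1-p) = (1:ℝ) by ring, one_pow] at h
            exact Eq.trans (Finset.sum_congr rfl (fun i _ => by ring)) h.symm
    have hS0 : 0 ≤ ∑ i ∈ Finset.Icc 1 m, (n.choose i : ℝ) * p ^ i * (1 - p) ^ (n - i) *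
        ∑ j ∈ Finset.range (i + 1), (n.choose j : ℝ) * 3 ^ j := by
      apply Finset.sum_nonneg
      intro i _
      have : 0 ≤ ∑ j ∈ Finset.range (i + 1), (n.choose j : ℝ) * 3 ^ j := by positivity
      positivity
    have hS : ∑ i ∈ Finset.Icc 1 m, (n.choose i : ℝ) * p ^ i * (1 - p) ^ (n - i) *
              ∑ j ∈ Finset.range (i + 1), (n.choose j : ℝ) * 3 ^ j
        ≤ t ^ (-(d * (n:ℝ))) * (1 + 3 * t) ^ n := by
      have hB0 : (0:ℝ) ≤ t ^ (-(d * (n:ℝ))) * (1 + 3 * t) ^ n := by positivity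
      calc ∑ i ∈ Finset.Icc 1 m, (n.choose i : ℝ) * p ^ i * (1 - p) ^ (n - i) *
              ∑ j ∈ Finset.range (i + 1), (n.choose j : ℝ) * 3 ^ j
          ≤ ∑ i ∈ Finset.Icc 1 m, (n.choose i : ℝ) * p ^ i * (1 - p) ^ (n - i) *
              (t ^ (-(d * (n:ℝ))) * (1 + 3 * t) ^ n) := by
            apply Finset.sum_le_sum
            intro i hi
            exact mul_le_mul_of_nonneg_left (hinner i hi) (by positivity)
        _ = (∑ i ∈ Finset.Icc 1 m, (n.choose i : ℝ) * p ^ i * (1 - p) ^ (n - i)) *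
              (t ^ (-(d * (n:ℝ))) * (1 + 3 * t) ^ n) := by
            rw [← Finset.sum_mul]
        _ ≤ 1 * (t ^ (-(d * (n:ℝ))) * (1 + 3 * t) ^ n) := mul_le_mul_of_nonneg_right hprob hB0
        _ = t ^ (-(d * (n:ℝ))) * (1 + 3 * t) ^ n := one_mul _
    have hA : (2:ℝ) ^ (-((n : ℝ) - ⌊R * n⌋)) ≤ (2:ℝ) ^ ((R - 1) * n) := by
      apply Real.rpow_le_rpow_of_exponent_le (by norm_num)
      have hfl := Int.floor_le (R * (n:ℝ))
      have h2 : (R-1)*(n:ℝ) = R*n - n := by ring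
      rw [h2]
      linarith
    calc (2 : ℝ) ^ (-((n : ℝ) - ⌊R * n⌋)) *
          ∑ i ∈ Finset.Icc 1 m, (n.choose i : ℝ) * p ^ i * (1 - p) ^ (n - i) *
              ∑ j ∈ Finset.range (i + 1), (n.choose j : ℝ) * 3 ^ j
        ≤ (2:ℝ) ^ ((R - 1) * (n:ℝ)) * (t ^ (-(d * (n:ℝ))) * (1 + 3 * t) ^ n) :=
          mul_le_mul hA hS hS0 (Real.rpow_nonneg (by norm_num) _)
      _ = c ^ n := by
          rw [hc_def, mul_pow, mul_pow,
            ← Real.rpow_natCast ((2:ℝ)^(R-1)) n, ← Real.rpow_natCast (t^(-d)) n,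
            ← Real.rpow_mul (by norm_num : (0:ℝ) ≤ 2), ← Real.rpow_mul ht0.le,
            show -d * (n:ℝ) = -(d * n) by ring]
          ring
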